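/- arXiv:2205.05838 — 2 statements merged into one kernel-verified Lean document; each statement's English description precedes it below -/
import Mathlib

section
/- Let n ≥ 2, fix V ∈ ℝ^{n×(n−1)} with Vᵀ·1 = 0 and Vᵀ V = I_{n−1}, and for symmetric C, D ∈ ℝ^{n×n} define OGW_lb(C,D) := (1/n²)·[ ‖C‖_F² + ‖D‖_F² − 2·Σ_{i=1}^{n−1} λᵢ↓(Vᵀ C V)·λᵢ↓(Vᵀ D V) − (4/n)·‖Vᵀ C 1‖·‖Vᵀ D 1‖ − (2/n²)·(1ᵀ C 1)(1ᵀ D 1) ]. Then for all symmetric C, D, E ∈ ℝ^{n×n}, √(OGW_lb(C,E)) ≤ √(OGW_lb(C,D)) + √(OGW_lb(D,E)). -/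
/-!
The matrix `[V | 𝟙/√n]` is orthogonal, so `‖C‖_F² = ‖VᵀCV‖_F² + (2/n)‖VᵀC𝟙‖² + (𝟙ᵀC𝟙)²/n²`,
and `‖VᵀCV‖_F²` is the sum of the squared eigenvalues of `VᵀCV`. Hence
`n² · OGW_lb(C, D) = ‖p C - p D‖²` for the feature vector
`p C = (λ↓(VᵀCV), √(2/n) ‖VᵀC𝟙‖, 𝟙ᵀC𝟙 / n)`, and `√OGW_lb` is a Euclidean distance up to the
factor `1/n`.
-/

open Matrix BigOperators

noncomputable section

/-- Squared Frobenius norm of a real matrix. -/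
def frobSq {m n : ℕ} (A : Matrix (Fin m) (Fin n) ℝ) : ℝ := ∑ i, ∑ j, (A i j) ^ 2

/-- Euclidean norm of a real vector. -/
def vnorm {n : ℕ} (v : Fin n → ℝ) : ℝ := Real.sqrt (∑ i, (v i) ^ 2)

/-- Eigenvalues of a real symmetric (Hermitian) matrix, listed in descending order. -/
def eigDesc {n : ℕ} {A : Matrix (Fin n) (Fin n) ℝ} (hA : A.IsHermitian) : Fin n → ℝ :=
  fun i => (hA.eigenvalues ∘ Tuple.sort hA.eigenvalues) i.rev

/-- Conjugating a real symmetric (Hermitian) matrix preserves symmetry. -/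
theorem conjHerm {n m : ℕ} (V : Matrix (Fin n) (Fin m) ℝ) {C : Matrix (Fin n) (Fin n) ℝ}
    (hC : C.IsHermitian) : (Vᵀ * C * V).IsHermitian := by
  have h := Matrix.isHermitian_mul_mul_conjTranspose Vᵀ hC
  simpa using h


/-- The closed-form lower bound `OGW_lb` of the orthogonal Gromov-Wasserstein discrepancy. -/
def OGWlb {n : ℕ} (V : Matrix (Fin n) (Fin (n - 1)) ℝ)
    (C D : Matrix (Fin n) (Fin n) ℝ) (hC : C.IsHermitian) (hD : D.IsHermitian) : ℝ :=
  (1 / (n : ℝ) ^ 2) * (frobSq C + frobSq D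
    - 2 * ∑ i, eigDesc (conjHerm V hC) i * eigDesc (conjHerm V hD) i
    - (4 / (n : ℝ)) * vnorm ((Vᵀ * C) *ᵥ (fun _ => (1 : ℝ)))
        * vnorm ((Vᵀ * D) *ᵥ (fun _ => (1 : ℝ)))
    - (2 / (n : ℝ) ^ 2) * ((∑ i, ∑ j, C i j) * (∑ i, ∑ j, D i j)))

lemma frobSq_transpose {m k : ℕ} (A : Matrix (Fin m) (Fin k) ℝ) : frobSq Aᵀ = frobSq A :=
  Finset.sum_comm

lemma frobSq_eq_trace_transpose_mul {m k : ℕ} (A : Matrix (Fin m) (Fin k) ℝ) :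
    frobSq A = (Aᵀ * A).trace := by
  simp only [frobSq, trace, diag, mul_apply, transpose_apply, sq]
  exact Finset.sum_comm

lemma frobSq_eq_sum_dotProduct {m k : ℕ} (A : Matrix (Fin m) (Fin k) ℝ) :
    frobSq A = ∑ j, Aᵀ j ⬝ᵥ Aᵀ j := by
  simp only [frobSq, dotProduct, transpose_apply, sq]
  exact Finset.sum_comm

lemma Matrix.IsHermitian.sum_eigenvalues_sq {ι : Type*} [Fintype ι] [DecidableEq ι]
    {A : Matrix ι ι ℝ} (hA : A.IsHermitian) : ∑ i, hA.eigenvalues i ^ 2 = (A * A).trace := by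
  conv_rhs => rw [hA.spectral_theorem, ← map_mul, Unitary.conjStarAlgAut_apply, trace_mul_cycle,
    Unitary.coe_star_mul_self, one_mul, diagonal_mul_diagonal, trace_diagonal]
  simp [sq]

lemma sum_comp_eigDesc {m : ℕ} {A : Matrix (Fin m) (Fin m) ℝ} (hA : A.IsHermitian) (f : ℝ → ℝ) :
    ∑ i, f (eigDesc hA i) = ∑ i, f (hA.eigenvalues i) :=
  Equiv.sum_comp (Fin.revPerm.trans (Tuple.sort hA.eigenvalues)) (f ∘ hA.eigenvalues)

lemma frobSq_eq_sum_eigDesc_sq {m : ℕ} {A : Matrix (Fin m) (Fin m) ℝ} (hA : A.IsHermitian) :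
    frobSq A = ∑ i, eigDesc hA i ^ 2 := by
  have hAt : Aᵀ = A := hA
  rw [sum_comp_eigDesc hA (· ^ 2), hA.sum_eigenvalues_sq, frobSq_eq_trace_transpose_mul, hAt]

section Complement

variable {n : ℕ} {V : Matrix (Fin n) (Fin (n - 1)) ℝ}

lemma mul_transpose_add_eq_one (hV1 : Vᵀ *ᵥ (fun _ => (1 : ℝ)) = 0) (hV2 : Vᵀ * V = 1) :
    V * Vᵀ + (n : ℝ)⁻¹ • vecMulVec (fun _ => 1) (fun _ => 1) = 1 := by
  rcases Nat.eq_zero_or_pos n with rfl | hn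
  · ext i; exact i.elim0
  have e : Fin n ≃ Fin (n - 1) ⊕ Fin 1 :=
    (finCongr (by omega)).trans finSumFinEquiv.symm
  -- `[V | 𝟙]` has the left inverse `[Vᵀ ; 𝟙ᵀ / n]`, hence also a right inverse.
  have hQP : fromRows Vᵀ ((n : ℝ)⁻¹ • replicateRow (Fin 1) (fun _ => 1)) *
      fromCols V (replicateCol (Fin 1) (fun _ => 1)) = 1 := by
    have hV1row : replicateRow (Fin 1) (fun _ : Fin n => (1 : ℝ)) * V = 0 := by
      rw [← transpose_replicateCol, ← transpose_transpose V, ← transpose_mul,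
        ← replicateCol_mulVec, hV1, replicateCol_zero, transpose_zero]
    rw [fromRows_mul_fromCols, hV2, ← replicateCol_mulVec, hV1, replicateCol_zero,
      Matrix.smul_mul, hV1row, smul_zero, Matrix.smul_mul, replicateRow_mul_replicateCol,
      ← fromBlocks_one]
    congr
    ext
    simp [dotProduct, Matrix.one_apply, Fin.fin_one_eq_zero, hn.ne']
  have hPQ := (fromCols_mul_fromRows_eq_one_comm e _ _ _ _).mpr hQP
  rw [fromCols_mul_fromRows, Matrix.mul_smul] at hPQ
  convert hPQ using 3
  exact vecMulVec_eq (Fin 1) _ _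

lemma dotProduct_self_eq_transpose_mulVec_add (hV1 : Vᵀ *ᵥ (fun _ => (1 : ℝ)) = 0)
    (hV2 : Vᵀ * V = 1) (x : Fin n → ℝ) :
    x ⬝ᵥ x = (Vᵀ *ᵥ x) ⬝ᵥ (Vᵀ *ᵥ x) + (n : ℝ)⁻¹ * ((fun _ => 1) ⬝ᵥ x) ^ 2 := by
  calc x ⬝ᵥ x = x ⬝ᵥ ((V * Vᵀ + (n : ℝ)⁻¹ • vecMulVec (fun _ => 1) (fun _ => 1)) *ᵥ x) := by
        rw [mul_transpose_add_eq_one hV1 hV2, one_mulVec]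
    _ = _ := by
      rw [add_mulVec, ← mulVec_mulVec, smul_mulVec, vecMulVec_mulVec, dotProduct_add,
        dotProduct_mulVec, ← mulVec_transpose]
      simp [dotProduct_comm x, sq]

lemma frobSq_eq_frobSq_transpose_mul_add (hV1 : Vᵀ *ᵥ (fun _ => (1 : ℝ)) = 0) (hV2 : Vᵀ * V = 1)
    {k : ℕ} (A : Matrix (Fin n) (Fin k) ℝ) :
    frobSq A = frobSq (Vᵀ * A) + (n : ℝ)⁻¹ * ((fun _ => 1) ᵥ* A) ⬝ᵥ ((fun _ => 1) ᵥ* A) := by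
  have hcol : ∀ j, (Vᵀ * A)ᵀ j = Vᵀ *ᵥ Aᵀ j := fun j => by
    ext; simp [mul_apply, mulVec, dotProduct]
  simp only [frobSq_eq_sum_dotProduct, dotProduct_self_eq_transpose_mulVec_add hV1 hV2 (Aᵀ _),
    hcol, Finset.sum_add_distrib, ← Finset.mul_sum]
  simp [dotProduct, vecMul, sq]

lemma frobSq_eq_of_isHermitian (hV1 : Vᵀ *ᵥ (fun _ => (1 : ℝ)) = 0) (hV2 : Vᵀ * V = 1)
    {C : Matrix (Fin n) (Fin n) ℝ} (hC : C.IsHermitian) :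
    frobSq C = frobSq (Vᵀ * C * V)
      + 2 * (n : ℝ)⁻¹ * ((Vᵀ * C) *ᵥ (fun _ => 1)) ⬝ᵥ ((Vᵀ * C) *ᵥ (fun _ => 1))
      + ((n : ℝ)⁻¹ * ((fun _ => 1) ⬝ᵥ (C *ᵥ (fun _ => 1)))) ^ 2 := by
  have hCt : Cᵀ = C := hC
  have hrow : (fun _ => 1) ᵥ* C = C *ᵥ (fun _ => 1) := by
    rw [← mulVec_transpose, hCt]
  have hrowV : (fun _ => 1) ᵥ* (C * V) = (Vᵀ * C) *ᵥ (fun _ => 1) := by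
    rw [← vecMul_vecMul, hrow, ← mulVec_transpose, mulVec_mulVec]
  have hVC : frobSq (Vᵀ * C) = frobSq (C * V) := by
    rw [← frobSq_transpose, transpose_mul, transpose_transpose, hCt]
  rw [frobSq_eq_frobSq_transpose_mul_add hV1 hV2 C, hVC,
    frobSq_eq_frobSq_transpose_mul_add hV1 hV2 (C * V), hrow, hrowV,
    dotProduct_self_eq_transpose_mulVec_add hV1 hV2 (C *ᵥ _), mulVec_mulVec, Matrix.mul_assoc]
  ring

end Complement

lemma vnorm_sq {m : ℕ} (v : Fin m → ℝ) : vnorm v ^ 2 = v ⬝ᵥ v := by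
  rw [vnorm, Real.sq_sqrt (Finset.sum_nonneg fun i _ => sq_nonneg (v i))]
  simp only [dotProduct, sq]

lemma sum_sum_eq_dotProduct_mulVec {m : ℕ} (C : Matrix (Fin m) (Fin m) ℝ) :
    ∑ i, ∑ j, C i j = (fun _ => 1) ⬝ᵥ (C *ᵥ (fun _ => 1)) := by
  simp [dotProduct, mulVec]

def ogwEmbedding {n : ℕ} (V : Matrix (Fin n) (Fin (n - 1)) ℝ) {C : Matrix (Fin n) (Fin n) ℝ}
    (hC : C.IsHermitian) : EuclideanSpace ℝ (Fin (n - 1) ⊕ Fin 2) :=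
  WithLp.toLp 2 (Sum.elim (eigDesc (conjHerm V hC))
    ![√(2 / n) * vnorm ((Vᵀ * C) *ᵥ fun _ => 1), (∑ i, ∑ j, C i j) / n])

section Embedding

variable {n : ℕ} (V : Matrix (Fin n) (Fin (n - 1)) ℝ) {C D : Matrix (Fin n) (Fin n) ℝ}

lemma inner_ogwEmbedding (hC : C.IsHermitian) (hD : D.IsHermitian) :
    inner ℝ (ogwEmbedding V hC) (ogwEmbedding V hD) =
      ∑ i, eigDesc (conjHerm V hC) i * eigDesc (conjHerm V hD) i
      + 2 / n * vnorm ((Vᵀ * C) *ᵥ fun _ => 1) * vnorm ((Vᵀ * D) *ᵥ fun _ => 1)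
      + (∑ i, ∑ j, C i j) * (∑ i, ∑ j, D i j) / n ^ 2 := by
  have h2n : √(2 / n) * √(2 / n) = 2 / n := Real.mul_self_sqrt (by positivity)
  simp only [ogwEmbedding, PiLp.inner_apply, Fintype.sum_sum_type, Fin.sum_univ_two,
    Sum.elim_inl, Sum.elim_inr, RCLike.inner_apply', conj_trivial,
    Matrix.cons_val_zero, Matrix.cons_val_one]
  rw [mul_mul_mul_comm, h2n]
  ring

lemma norm_ogwEmbedding_sq (hV1 : Vᵀ *ᵥ (fun _ => (1 : ℝ)) = 0) (hV2 : Vᵀ * V = 1)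
    (hC : C.IsHermitian) : ‖ogwEmbedding V hC‖ ^ 2 = frobSq C := by
  rw [← real_inner_self_eq_norm_sq, inner_ogwEmbedding, frobSq_eq_of_isHermitian hV1 hV2 hC,
    frobSq_eq_sum_eigDesc_sq (conjHerm V hC), ← vnorm_sq, sum_sum_eq_dotProduct_mulVec]
  simp only [sq]
  ring

lemma OGWlb_eq_sq_dist (hV1 : Vᵀ *ᵥ (fun _ => (1 : ℝ)) = 0) (hV2 : Vᵀ * V = 1)
    (hC : C.IsHermitian) (hD : D.IsHermitian) :
    OGWlb V C D hC hD = (dist (ogwEmbedding V hC) (ogwEmbedding V hD) / n) ^ 2 := by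
  rw [dist_eq_norm, div_pow, norm_sub_sq_real, norm_ogwEmbedding_sq V hV1 hV2,
    norm_ogwEmbedding_sq V hV1 hV2, inner_ogwEmbedding, OGWlb]
  ring

end Embedding

theorem OGWlb_sqrt_triangle_general (n : ℕ)
    (V : Matrix (Fin n) (Fin (n - 1)) ℝ)
    (hV1 : Vᵀ *ᵥ (fun _ => (1 : ℝ)) = 0) (hV2 : Vᵀ * V = 1)
    (C D E : Matrix (Fin n) (Fin n) ℝ)
    (hC : C.IsHermitian) (hD : D.IsHermitian) (hE : E.IsHermitian) :
    Real.sqrt (OGWlb V C E hC hE)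
      ≤ Real.sqrt (OGWlb V C D hC hD) + Real.sqrt (OGWlb V D E hD hE) := by
  simp only [OGWlb_eq_sq_dist V hV1 hV2, Real.sqrt_sq (div_nonneg dist_nonneg n.cast_nonneg)]
  rw [← add_div]
  exact div_le_div_of_nonneg_right (dist_triangle _ _ _) n.cast_nonneg

/-- The square root of `OGW_lb` satisfies the triangle inequality on symmetric matrices. -/
theorem OGWlb_sqrt_triangle (n : ℕ) (hn : 2 ≤ n)
    (V : Matrix (Fin n) (Fin (n - 1)) ℝ)
    (hV1 : Vᵀ *ᵥ (fun _ => (1 : ℝ)) = 0) (hV2 : Vᵀ * V = 1)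
    (C D E : Matrix (Fin n) (Fin n) ℝ)
    (hC : C.IsHermitian) (hD : D.IsHermitian) (hE : E.IsHermitian) :
    Real.sqrt (OGWlb V C E hC hE)
      ≤ Real.sqrt (OGWlb V C D hC hD) + Real.sqrt (OGWlb V D E hD hE) :=
  OGWlb_sqrt_triangle_general n V hV1 hV2 C D E hC hD hE

end
end

section
/- Let m ≥ n ≥ 1, let C ∈ ℝ^{m×m} and D ∈ ℝ^{n×n} be symmetric, and let P ∈ ℝ^{m×n} satisfy Pᵀ P = I_n. Then (2/(mn))·tr(C P D Pᵀ) ≤ (1/m²)·‖C‖_F² + (1/n²)·‖D‖_F². Consequently, the extended orthogonal Gromov–Wasserstein discrepancy OGW(C,D) := (1/m²)‖C‖_F² + (1/n²)‖D‖_F² − (2/(mn))·sup_{P ∈ Õ_{m,n} ∩ Ẽ} tr(C P D Pᵀ) is nonnegative, where Õ_{m,n} := {P ∈ ℝ^{m×n} : Pᵀ P = I_n} and Ẽ := {P : P·1_n = √(n/m)·1_m, Pᵀ·1_m = √(m/n)·1_n}. -/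
open Matrix BigOperators

noncomputable section

/-- The set `Õ_{m,n} ∩ Ẽ` of semi-orthogonal matrices with generalized marginals. -/
def OEt (m n : ℕ) : Set (Matrix (Fin m) (Fin n) ℝ) :=
  {P | Pᵀ * P = 1
    ∧ (P *ᵥ (fun _ => (1 : ℝ)) = fun _ => Real.sqrt ((n : ℝ) / (m : ℝ)))
    ∧ (Pᵀ *ᵥ (fun _ => (1 : ℝ)) = fun _ => Real.sqrt ((m : ℝ) / (n : ℝ)))}

/-! The proof is Young's inequality for the Frobenius inner product: expanding
`0 ≤ ‖(1/n) P D Pᵀ - (1/m) C‖_F²` gives the bound, because conjugation by a semi-orthogonal `P`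
preserves `‖D‖_F` and, `C` being symmetric, `⟪P D Pᵀ, C⟫_F = tr (C P D Pᵀ)`. -/

section Frobenius

variable {m n : ℕ}

lemma frobSq_nonneg (A : Matrix (Fin m) (Fin n) ℝ) : 0 ≤ frobSq A :=
  Finset.sum_nonneg fun _ _ => Finset.sum_nonneg fun _ _ => sq_nonneg _

lemma frobSq_eq_trace_mul_transpose (A : Matrix (Fin m) (Fin n) ℝ) :
    frobSq A = trace (A * Aᵀ) := by
  simp only [frobSq, sq]
  exact sum_hadamard_eq A A

lemma frobSq_smul_sub_smul (a b : ℝ) (A B : Matrix (Fin m) (Fin n) ℝ) :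
    frobSq (a • A - b • B) = a ^ 2 * frobSq A - 2 * a * b * trace (A * Bᵀ) + b ^ 2 * frobSq B := by
  rw [← sum_hadamard_eq]
  simp only [frobSq, hadamard_apply, Matrix.sub_apply, Matrix.smul_apply, smul_eq_mul,
    Finset.mul_sum, ← Finset.sum_add_distrib, ← Finset.sum_sub_distrib]
  refine Finset.sum_congr rfl fun i _ => Finset.sum_congr rfl fun j _ => ?_
  ring

lemma two_mul_mul_trace_mul_transpose_le (a b : ℝ) (A B : Matrix (Fin m) (Fin n) ℝ) :
    2 * a * b * trace (A * Bᵀ) ≤ a ^ 2 * frobSq A + b ^ 2 * frobSq B := by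
  have h := frobSq_nonneg (a • A - b • B)
  rw [frobSq_smul_sub_smul] at h
  linarith

lemma frobSq_mul_mul_transpose {P : Matrix (Fin m) (Fin n) ℝ} (hP : Pᵀ * P = 1)
    (D : Matrix (Fin n) (Fin n) ℝ) : frobSq (P * D * Pᵀ) = frobSq D := by
  have hPP : ∀ X : Matrix (Fin n) (Fin m) ℝ, Pᵀ * (P * X) = X := fun X => by
    rw [← Matrix.mul_assoc, hP, Matrix.one_mul]
  have hsq : P * D * Pᵀ * (P * D * Pᵀ)ᵀ = P * (D * Dᵀ) * Pᵀ := by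
    simp only [transpose_mul, transpose_transpose, Matrix.mul_assoc, hPP]
  rw [frobSq_eq_trace_mul_transpose, frobSq_eq_trace_mul_transpose, hsq, trace_mul_cycle, hP,
    Matrix.one_mul]

lemma two_mul_mul_trace_conj_le {C : Matrix (Fin m) (Fin m) ℝ} (hC : C.IsSymm)
    {P : Matrix (Fin m) (Fin n) ℝ} (hP : Pᵀ * P = 1) (D : Matrix (Fin n) (Fin n) ℝ) (a b : ℝ) :
    2 * a * b * trace (C * P * D * Pᵀ) ≤ a ^ 2 * frobSq C + b ^ 2 * frobSq D := by
  have h := two_mul_mul_trace_mul_transpose_le b a (P * D * Pᵀ) C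
  rw [frobSq_mul_mul_transpose hP, hC.eq, trace_mul_comm] at h
  simp only [Matrix.mul_assoc] at h ⊢
  linarith

end Frobenius

theorem extended_OGW_nonneg_general (m n : ℕ)
    (C : Matrix (Fin m) (Fin m) ℝ) (D : Matrix (Fin n) (Fin n) ℝ)
    (hC : C.IsSymm) :
    (∀ P : Matrix (Fin m) (Fin n) ℝ, Pᵀ * P = 1 →
      (2 / ((m : ℝ) * (n : ℝ))) * Matrix.trace (C * P * D * Pᵀ)
        ≤ (1 / (m : ℝ) ^ 2) * frobSq C + (1 / (n : ℝ) ^ 2) * frobSq D)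
    ∧ 0 ≤ (1 / (m : ℝ) ^ 2) * frobSq C + (1 / (n : ℝ) ^ 2) * frobSq D
        - (2 / ((m : ℝ) * (n : ℝ)))
          * sSup ((fun P => Matrix.trace (C * P * D * Pᵀ)) '' OEt m n) := by
  have bound : ∀ P : Matrix (Fin m) (Fin n) ℝ, Pᵀ * P = 1 →
      (2 / ((m : ℝ) * (n : ℝ))) * Matrix.trace (C * P * D * Pᵀ)
        ≤ (1 / (m : ℝ) ^ 2) * frobSq C + (1 / (n : ℝ) ^ 2) * frobSq D := fun P hP => by
    have h := two_mul_mul_trace_conj_le hC hP D (1 / m) (1 / n)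
    calc _ = 2 * (1 / (m : ℝ)) * (1 / n) * trace (C * P * D * Pᵀ) := by ring
      _ ≤ _ := h
      _ = _ := by ring
  refine ⟨bound, ?_⟩
  have hC₀ := frobSq_nonneg C
  have hD₀ := frobSq_nonneg D
  rw [sub_nonneg, ← smul_eq_mul, ← Real.sSup_smul_of_nonneg (by positivity)]
  refine Real.sSup_le ?_ (by positivity)
  rintro _ ⟨_, ⟨P, hP, rfl⟩, rfl⟩
  exact bound P hP.1

/-- For semi-orthogonal `P`, `(2/(mn))·tr(C P D Pᵀ) ≤ (1/m²)‖C‖_F² + (1/n²)‖D‖_F²`;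
consequently, the extended orthogonal Gromov-Wasserstein discrepancy is nonnegative. -/
theorem extended_OGW_nonneg (m n : ℕ) (hn : 1 ≤ n) (hmn : n ≤ m)
    (C : Matrix (Fin m) (Fin m) ℝ) (D : Matrix (Fin n) (Fin n) ℝ)
    (hC : C.IsSymm) (hD : D.IsSymm) :
    (∀ P : Matrix (Fin m) (Fin n) ℝ, Pᵀ * P = 1 →
      (2 / ((m : ℝ) * (n : ℝ))) * Matrix.trace (C * P * D * Pᵀ)
        ≤ (1 / (m : ℝ) ^ 2) * frobSq C + (1 / (n : ℝ) ^ 2) * frobSq D)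
    ∧ 0 ≤ (1 / (m : ℝ) ^ 2) * frobSq C + (1 / (n : ℝ) ^ 2) * frobSq D
        - (2 / ((m : ℝ) * (n : ℝ)))
          * sSup ((fun P => Matrix.trace (C * P * D * Pᵀ)) '' OEt m n) :=
  extended_OGW_nonneg_general m n C D hC
end
end
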